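/- Let H₀ be a Hermitian d×d complex matrix with largest eigenvalue E_max and smallest eigenvalue E_min, and define the commutator superoperator L(A) = −i·(H₀·A − A·H₀) on d×d complex matrices. Then the operator norm of L with respect to the trace norm equals the spectral diameter of H₀: sup over A ≠ 0 of ‖L(A)‖₁ / ‖A‖₁ = E_max − E_min, where ‖A‖₁ = Tr√(AᴴA). -/

import Mathlib

/-!
The trace norm is dual to the operator norm: `Re Tr (C M) ≤ ‖C‖ ‖M‖₁`, with equality for the
contraction `C = (MᴴM)^{-1/2} Mᴴ`, the inverse square root being taken as `0` on the kernel.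
This yields `‖X A‖₁ ≤ ‖X‖ ‖A‖₁`, `‖A X‖₁ ≤ ‖A‖₁ ‖X‖` and the triangle inequality. Since
`[H₀, A] = [H₀ - c, A]`, taking `c` the midpoint of the spectrum gives
`‖[H₀, A]‖₁ ≤ 2 ‖H₀ - c‖ ‖A‖₁ = (E_max - E_min) ‖A‖₁`. Equality holds for `A = v wᴴ` with `v`, `w`
eigenvectors for `E_max`, `E_min`, since then `[H₀, A] = (E_max - E_min) A`.
-/

open Matrix
open scoped ComplexOrder

/-- Trace norm (Schatten 1-norm): `‖A‖₁ = Tr √(Aᴴ A)`. -/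
noncomputable def traceNorm {d : ℕ} (A : Matrix (Fin d) (Fin d) ℂ) : ℝ :=
  (((Matrix.posSemidef_conjTranspose_mul_self A).1.eigenvectorUnitary.1 *
      diagonal (((↑) : ℝ → ℂ) ∘ Real.sqrt ∘ (Matrix.posSemidef_conjTranspose_mul_self A).1.eigenvalues) *
      (star (Matrix.posSemidef_conjTranspose_mul_self A).1.eigenvectorUnitary :
        Matrix (Fin d) (Fin d) ℂ)).trace).re

open scoped Matrix.Norms.L2Operator InnerProductSpace

section General

variable {𝕜 n : Type*} [RCLike 𝕜] [Fintype n] [DecidableEq n]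

lemma Matrix.trace_eq_sum_inner_toEuclideanLin (X : Matrix n n 𝕜)
    (b : OrthonormalBasis n 𝕜 (EuclideanSpace 𝕜 n)) :
    X.trace = ∑ j, ⟪b j, toEuclideanLin X (b j)⟫_𝕜 := by
  rw [← LinearMap.trace_eq_sum_inner,
    LinearMap.trace_eq_matrix_trace 𝕜 (EuclideanSpace.basisFun n 𝕜).toBasis,
    toEuclideanLin_eq_toLin_orthonormal, LinearMap.toMatrix_toLin]

lemma Matrix.norm_toEuclideanLin_apply_le (X : Matrix n n 𝕜) (x : EuclideanSpace 𝕜 n) :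
    ‖toEuclideanLin X x‖ ≤ ‖X‖ * ‖x‖ :=
  ContinuousLinearMap.le_opNorm (LinearMap.toContinuousLinearMap (toEuclideanLin X)) x

lemma Matrix.norm_toEuclideanLin_eigenvectorBasis_conjTranspose_mul_self (M : Matrix n n 𝕜)
    (j : n) :
    ‖toEuclideanLin M ((posSemidef_conjTranspose_mul_self M).1.eigenvectorBasis j)‖ =
      √((posSemidef_conjTranspose_mul_self M).1.eigenvalues j) := by
  set hX := (posSemidef_conjTranspose_mul_self M).1
  set v := hX.eigenvectorBasis j
  have hv : toEuclideanLin (Mᴴ * M) v = hX.eigenvalues j • v :=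
    WithLp.ofLp_injective _ (hX.mulVec_eigenvectorBasis j)
  -- `‖M v‖² = ⟪v, Mᴴ M v⟫ = λ ‖v‖²`
  have hsq : ‖toEuclideanLin M v‖ ^ 2 = hX.eigenvalues j := by
    rw [← RCLike.ofReal_inj (K := 𝕜), RCLike.ofReal_pow, ← inner_self_eq_norm_sq_to_K,
      ← LinearMap.adjoint_inner_right, ← toEuclideanLin_conjTranspose_eq_adjoint,
      ← LinearMap.comp_apply, ← toLpLin_mul_same, hv, inner_smul_right_eq_smul,
      inner_self_eq_norm_sq_to_K, hX.eigenvectorBasis.orthonormal.1 j]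
    simp [RCLike.real_smul_eq_coe_mul]
  rw [← hsq, Real.sqrt_sq (norm_nonneg _)]

lemma Matrix.IsHermitian.exists_ne_zero_commutator_eq_smul {H : Matrix n n 𝕜}
    (hH : H.IsHermitian) (i j : n) :
    ∃ A : Matrix n n 𝕜, A ≠ 0 ∧ H * A - A * H = (hH.eigenvalues i - hH.eigenvalues j) • A := by
  set v := (hH.eigenvectorBasis i).ofLp
  set w := (hH.eigenvectorBasis j).ofLp
  have hw : star w ᵥ* H = hH.eigenvalues j • star w := by
    conv_lhs => rw [← hH.eq, ← star_mulVec]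
    rw [hH.mulVec_eigenvectorBasis, star_smul, star_trivial]
  refine ⟨vecMulVec v (star w), ?_, ?_⟩
  · simpa [v, w, vecMulVec_eq_zero, not_or] using
      ⟨hH.eigenvectorBasis.orthonormal.ne_zero i, hH.eigenvectorBasis.orthonormal.ne_zero j⟩
  · rw [mul_vecMulVec, vecMulVec_mul, hH.mulVec_eigenvectorBasis, hw, smul_vecMulVec,
      vecMulVec_smul, sub_smul]

lemma Matrix.IsHermitian.norm_sub_smul_one_le {H : Matrix n n ℂ} (hH : H.IsHermitian)
    {c r : ℝ} (hr : 0 ≤ r) (h : ∀ i, |hH.eigenvalues i - c| ≤ r) :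
    ‖H - (c : ℂ) • 1‖ ≤ r := by
  have hcfc : H - (c : ℂ) • 1 = cfc (fun x : ℝ => x - c) H := by
    rw [cfc_sub _ _ _, cfc_id' ℝ H, cfc_const c H, Algebra.algebraMap_eq_smul_one,
      Complex.coe_smul]
  rw [hcfc]
  refine norm_cfc_le hr fun x hx => ?_
  obtain ⟨i, rfl⟩ := hH.spectrum_real_eq_range_eigenvalues ▸ hx
  exact h i

end General

section TraceNorm

variable {d : ℕ}

lemma traceNorm_eq_sum_sqrt_eigenvalues (M : Matrix (Fin d) (Fin d) ℂ) :
    traceNorm M = ∑ i, √((posSemidef_conjTranspose_mul_self M).1.eigenvalues i) := by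
  have hU := (posSemidef_conjTranspose_mul_self M).1.eigenvectorUnitary.2
  rw [traceNorm, trace_mul_cycle, (mem_unitaryGroup_iff').mp hU, one_mul, trace_diagonal,
    Complex.re_sum]
  simp

lemma traceNorm_eq_re_trace_cfc_sqrt (M : Matrix (Fin d) (Fin d) ℂ) :
    traceNorm M = (cfc Real.sqrt (Mᴴ * M)).trace.re := by
  rw [(posSemidef_conjTranspose_mul_self M).1.cfc_eq, IsHermitian.cfc,
    Unitary.conjStarAlgAut_apply]
  rfl

lemma traceNorm_nonneg (M : Matrix (Fin d) (Fin d) ℂ) : 0 ≤ traceNorm M := by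
  rw [traceNorm_eq_sum_sqrt_eigenvalues]
  positivity

lemma re_trace_mul_le_norm_mul_traceNorm (C M : Matrix (Fin d) (Fin d) ℂ) :
    (C * M).trace.re ≤ ‖C‖ * traceNorm M := by
  set b := (posSemidef_conjTranspose_mul_self M).1.eigenvectorBasis
  calc (C * M).trace.re ≤ ‖(C * M).trace‖ := Complex.re_le_norm _
    _ ≤ ∑ j, ‖⟪b j, toEuclideanLin (C * M) (b j)⟫_ℂ‖ := by
      rw [trace_eq_sum_inner_toEuclideanLin _ b]
      exact norm_sum_le _ _
    _ ≤ ∑ j, ‖C‖ * ‖toEuclideanLin M (b j)‖ := by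
      gcongr with j
      rw [toLpLin_mul_same, LinearMap.comp_apply]
      grw [norm_inner_le_norm, b.orthonormal.1 j, one_mul, norm_toEuclideanLin_apply_le]
    _ = ‖C‖ * traceNorm M := by
      rw [← Finset.mul_sum, traceNorm_eq_sum_sqrt_eigenvalues]
      exact congrArg _ (Finset.sum_congr rfl fun j _ =>
        norm_toEuclideanLin_eigenvectorBasis_conjTranspose_mul_self M j)

lemma exists_norm_le_one_re_trace_mul_eq_traceNorm (M : Matrix (Fin d) (Fin d) ℂ) :
    ∃ C : Matrix (Fin d) (Fin d) ℂ, ‖C‖ ≤ 1 ∧ (C * M).trace.re = traceNorm M := by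
  have hX : IsSelfAdjoint (Mᴴ * M) := (isHermitian_conjTranspose_mul_self M).isSelfAdjoint
  have hcont (f : ℝ → ℝ) : ContinuousOn f (spectrum ℝ (Mᴴ * M)) :=
    (Mᴴ * M).finite_real_spectrum.continuousOn f
  -- `(√x)⁻¹ = 0` for `x ≤ 0`, so `(√x)⁻¹ * x = √x` for every real `x` (`Real.div_sqrt`).
  set G := cfc (fun x : ℝ => (√x)⁻¹) (Mᴴ * M)
  refine ⟨G * Mᴴ, ?_, ?_⟩
  · have hGG : G * Mᴴ * star (G * Mᴴ) = cfc (fun x : ℝ => (√x)⁻¹ * x * (√x)⁻¹) (Mᴴ * M) := by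
      rw [cfc_mul _ _ _ (hcont _) (hcont _), cfc_mul _ _ _ (hcont _) (hcont _),
        cfc_id' ℝ (Mᴴ * M), star_mul, star_eq_conjTranspose, conjTranspose_conjTranspose,
        (cfc_predicate _ _ : IsSelfAdjoint G).star_eq]
      simp only [mul_assoc]
      rfl
    have hsq : ‖G * Mᴴ‖ * ‖G * Mᴴ‖ ≤ 1 := by
      rw [← CStarRing.norm_self_mul_star, hGG]
      refine norm_cfc_le zero_le_one fun x _ => ?_
      rw [← div_eq_inv_mul, Real.div_sqrt, Real.norm_eq_abs, abs_of_nonneg (by positivity)]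
      exact mul_inv_le_one
    nlinarith [norm_nonneg (G * Mᴴ)]
  · rw [mul_assoc, ← cfc_id' ℝ (Mᴴ * M), ← cfc_mul _ _ _ (hcont _) (hcont _),
      traceNorm_eq_re_trace_cfc_sqrt]
    simp_rw [← div_eq_inv_mul, Real.div_sqrt]

lemma traceNorm_le_of_forall_re_trace_mul_le {M : Matrix (Fin d) (Fin d) ℂ} {r : ℝ}
    (h : ∀ C : Matrix (Fin d) (Fin d) ℂ, ‖C‖ ≤ 1 → (C * M).trace.re ≤ r) : traceNorm M ≤ r := by
  obtain ⟨C, hC, hCM⟩ := exists_norm_le_one_re_trace_mul_eq_traceNorm M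
  exact hCM ▸ h C hC

lemma traceNorm_smul_le (c : ℂ) (M : Matrix (Fin d) (Fin d) ℂ) :
    traceNorm (c • M) ≤ ‖c‖ * traceNorm M :=
  traceNorm_le_of_forall_re_trace_mul_le fun C hC => calc
    (C * (c • M)).trace.re = ((c • C) * M).trace.re := by rw [mul_smul_comm, smul_mul_assoc]
    _ ≤ ‖c • C‖ * traceNorm M := re_trace_mul_le_norm_mul_traceNorm _ _
    _ ≤ ‖c‖ * traceNorm M := by
      rw [norm_smul]
      gcongr
      · exact traceNorm_nonneg M
      · exact mul_le_of_le_one_right (norm_nonneg c) hC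

lemma traceNorm_smul (c : ℂ) (M : Matrix (Fin d) (Fin d) ℂ) :
    traceNorm (c • M) = ‖c‖ * traceNorm M := by
  rcases eq_or_ne c 0 with rfl | hc
  · have h0 := traceNorm_smul_le 0 M
    rw [norm_zero, zero_mul] at h0 ⊢
    exact h0.antisymm (traceNorm_nonneg _)
  refine (traceNorm_smul_le c M).antisymm ?_
  calc ‖c‖ * traceNorm M = ‖c‖ * traceNorm (c⁻¹ • c • M) := by rw [inv_smul_smul₀ hc]
    _ ≤ ‖c‖ * (‖c⁻¹‖ * traceNorm (c • M)) := by gcongr; exact traceNorm_smul_le _ _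
    _ = traceNorm (c • M) := by
      rw [norm_inv, ← mul_assoc, mul_inv_cancel₀ (norm_ne_zero_iff.2 hc), one_mul]

lemma traceNorm_sub_le (M N : Matrix (Fin d) (Fin d) ℂ) :
    traceNorm (M - N) ≤ traceNorm M + traceNorm N :=
  traceNorm_le_of_forall_re_trace_mul_le fun C hC => calc
    (C * (M - N)).trace.re = (C * M).trace.re + (-C * N).trace.re := by
      rw [mul_sub, trace_sub, neg_mul, trace_neg, Complex.sub_re, Complex.neg_re, sub_eq_add_neg]
    _ ≤ ‖C‖ * traceNorm M + ‖-C‖ * traceNorm N :=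
      add_le_add (re_trace_mul_le_norm_mul_traceNorm _ _) (re_trace_mul_le_norm_mul_traceNorm _ _)
    _ ≤ traceNorm M + traceNorm N := by
      rw [norm_neg]
      gcongr <;> exact mul_le_of_le_one_left (traceNorm_nonneg _) hC

lemma traceNorm_mul_le_norm_mul (X A : Matrix (Fin d) (Fin d) ℂ) :
    traceNorm (X * A) ≤ ‖X‖ * traceNorm A :=
  traceNorm_le_of_forall_re_trace_mul_le fun C hC => calc
    (C * (X * A)).trace.re = (C * X * A).trace.re := by rw [mul_assoc]
    _ ≤ ‖C * X‖ * traceNorm A := re_trace_mul_le_norm_mul_traceNorm _ _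
    _ ≤ ‖X‖ * traceNorm A := by
      gcongr
      · exact traceNorm_nonneg A
      · exact (norm_mul_le C X).trans (mul_le_of_le_one_left (norm_nonneg X) hC)

lemma traceNorm_mul_le_mul_norm (A X : Matrix (Fin d) (Fin d) ℂ) :
    traceNorm (A * X) ≤ traceNorm A * ‖X‖ :=
  traceNorm_le_of_forall_re_trace_mul_le fun C hC => calc
    (C * (A * X)).trace.re = (X * C * A).trace.re := by
      rw [← mul_assoc, trace_mul_comm, mul_assoc]
    _ ≤ ‖X * C‖ * traceNorm A := re_trace_mul_le_norm_mul_traceNorm _ _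
    _ ≤ traceNorm A * ‖X‖ := by
      rw [mul_comm (traceNorm A)]
      gcongr
      · exact traceNorm_nonneg A
      · exact (norm_mul_le X C).trans (mul_le_of_le_one_right (norm_nonneg X) hC)

lemma traceNorm_pos {A : Matrix (Fin d) (Fin d) ℂ} (hA : A ≠ 0) : 0 < traceNorm A := by
  have htrace : 0 < (Aᴴ * A).trace :=
    (posSemidef_conjTranspose_mul_self A).trace_nonneg.lt_of_ne'
      (trace_conjTranspose_mul_self_eq_zero_iff.not.2 hA)
  exact pos_of_mul_pos_right ((Complex.pos_iff.1 htrace).1.trans_le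
    (re_trace_mul_le_norm_mul_traceNorm Aᴴ A)) (norm_nonneg _)

lemma traceNorm_commutator_le (H A : Matrix (Fin d) (Fin d) ℂ) (c : ℂ) :
    traceNorm (H * A - A * H) ≤ 2 * ‖H - c • 1‖ * traceNorm A := by
  have hshift : H * A - A * H = (H - c • 1) * A - A * (H - c • 1) := by
    simp only [sub_mul, mul_sub, smul_mul_assoc, mul_smul_comm, one_mul, mul_one]
    abel
  calc traceNorm (H * A - A * H)
      ≤ traceNorm ((H - c • 1) * A) + traceNorm (A * (H - c • 1)) :=
        hshift ▸ traceNorm_sub_le _ _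
    _ ≤ ‖H - c • 1‖ * traceNorm A + traceNorm A * ‖H - c • 1‖ :=
      add_le_add (traceNorm_mul_le_norm_mul _ _) (traceNorm_mul_le_mul_norm _ _)
    _ = 2 * ‖H - c • 1‖ * traceNorm A := by ring

lemma Matrix.IsHermitian.traceNorm_commutator_le_of_eigenvalues_mem_Icc
    {H : Matrix (Fin d) (Fin d) ℂ} (hH : H.IsHermitian) {lo hi : ℝ} (hlohi : lo ≤ hi)
    (h : ∀ i, hH.eigenvalues i ∈ Set.Icc lo hi) (A : Matrix (Fin d) (Fin d) ℂ) :
    traceNorm (H * A - A * H) ≤ (hi - lo) * traceNorm A := by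
  have hnorm : ‖H - (((lo + hi) / 2 : ℝ) : ℂ) • 1‖ ≤ (hi - lo) / 2 :=
    hH.norm_sub_smul_one_le (by linarith) fun i =>
      abs_le.2 ⟨by linarith [(h i).1], by linarith [(h i).2]⟩
  calc traceNorm (H * A - A * H)
      ≤ 2 * ‖H - (((lo + hi) / 2 : ℝ) : ℂ) • 1‖ * traceNorm A := traceNorm_commutator_le H A _
    _ ≤ 2 * ((hi - lo) / 2) * traceNorm A := by gcongr; exact traceNorm_nonneg A
    _ = (hi - lo) * traceNorm A := by ring

end TraceNorm

/-- Appendix C of the paper: for a Hermitian matrix `H₀` with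
largest eigenvalue `E_max` and smallest eigenvalue `E_min`, the induced 1-norm of the
commutator superoperator `L(A) = −i(H₀A − AH₀)` equals the spectral diameter:
`sup_{A ≠ 0} ‖L(A)‖₁ / ‖A‖₁ = E_max − E_min`. -/
theorem commutator_one_norm (d : ℕ) (hd : 1 ≤ d)
    (H₀ : Matrix (Fin d) (Fin d) ℂ) (hH₀ : H₀.IsHermitian) :
    sSup {r : ℝ | ∃ A : Matrix (Fin d) (Fin d) ℂ, A ≠ 0 ∧
        r = traceNorm ((-Complex.I) • (H₀ * A - A * H₀)) / traceNorm A}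
      = (⨆ i, hH₀.eigenvalues i) - (⨅ i, hH₀.eigenvalues i) := by
  have : Nonempty (Fin d) := ⟨⟨0, hd⟩⟩
  obtain ⟨iMax, hiMax⟩ := exists_eq_ciSup_of_finite (f := hH₀.eigenvalues)
  obtain ⟨iMin, hiMin⟩ := exists_eq_ciInf_of_finite (f := hH₀.eigenvalues)
  set Emax := ⨆ i, hH₀.eigenvalues i
  set Emin := ⨅ i, hH₀.eigenvalues i
  have hbounds i : hH₀.eigenvalues i ∈ Set.Icc Emin Emax :=
    ⟨ciInf_le (Finite.bddBelow_range _) i, le_ciSup (Finite.bddAbove_range _) i⟩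
  have hle : Emin ≤ Emax := (hbounds iMin).1.trans (hbounds iMin).2
  have hI (X : Matrix (Fin d) (Fin d) ℂ) : traceNorm ((-Complex.I) • X) = traceNorm X := by
    rw [traceNorm_smul, norm_neg, Complex.norm_I, one_mul]
  refine IsGreatest.csSup_eq ⟨?_, ?_⟩
  · obtain ⟨A, hA, hcomm⟩ := hH₀.exists_ne_zero_commutator_eq_smul iMax iMin
    refine ⟨A, hA, ?_⟩
    rw [hI, hcomm, ← Complex.coe_smul, traceNorm_smul, Complex.norm_real, hiMax, hiMin,
      Real.norm_of_nonneg (sub_nonneg.2 hle), mul_div_cancel_right₀ _ (traceNorm_pos hA).ne']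
  · rintro _ ⟨A, hA, rfl⟩
    rw [hI, div_le_iff₀ (traceNorm_pos hA)]
    exact hH₀.traceNorm_commutator_le_of_eigenvalues_mem_Icc hle hbounds A
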